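/- Let C be the dual-pivot quickselect cost array defined from the 'smaller pivot first' partitioning costs P^sf by the standard recurrence. Then for every n ≥ 3, the average number of comparisons to select the smallest element satisfies C(n,1) = C(n,n) = (5/2)·n − (8/3)·H_n + 1/18. -/

import Mathlib

open Finset

/-- Harmonic numbers `H_n = ∑_{k=1}^n 1/k`. -/
noncomputable def H (n : ℕ) : ℝ := ∑ k ∈ Finset.Icc 1 n, (1 : ℝ) / k

/-- Alternating harmonic numbers `H^alt_n = ∑_{k=1}^n (-1)^k/k`. -/
noncomputable def Halt (n : ℕ) : ℝ := ∑ k ∈ Finset.Icc 1 n, (-1 : ℝ) ^ k / k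

/-- The dual-pivot quickselect cost array defined from expected partitioning
costs `P` by the standard recurrence:  `C(n,j) = 0` whenever `n ≤ 1` or `j < 1`
or `j > n`; and for `n ≥ 2` and `1 ≤ j ≤ n`,
`C(n,j) = P(n) + (2/(n(n−1)))·( ∑_{s=j}^{n−2} (n−1−s)·C(s,j)
  + ∑_{m=1}^{n−2} ∑_{s=max(0,j−m−1)}^{min(j−2, n−m−2)} C(m, j−s−1)
  + ∑_{ℓ=n−j+1}^{n−2} (n−1−ℓ)·C(ℓ, n−j+1) )`.
(The `attach` is only needed for the termination proof.) -/
noncomputable def qsCost (P : ℕ → ℝ) : ℕ → ℤ → ℝ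
  | n, j =>
    if n ≤ 1 ∨ j < 1 ∨ (n : ℤ) < j then 0
    else
      P n + 2 / ((n : ℝ) * ((n : ℝ) - 1)) *
        ((∑ s ∈ (Finset.Icc j.toNat (n - 2)).attach,
            ((n : ℝ) - 1 - (s : ℕ)) * qsCost P (s : ℕ) j) +
         (∑ m ∈ (Finset.Icc 1 (n - 2)).attach,
            ∑ s ∈ Finset.Icc (max 0 (j - ((m : ℕ) : ℤ) - 1))
                (min (j - 2) ((n : ℤ) - ((m : ℕ) : ℤ) - 2)),
              qsCost P (m : ℕ) (j - s - 1)) +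
         (∑ l ∈ (Finset.Icc ((n : ℤ) - j + 1).toNat (n - 2)).attach,
            ((n : ℝ) - 1 - (l : ℕ)) * qsCost P (l : ℕ) ((n : ℤ) - j + 1)))
  termination_by n j => n
  decreasing_by
    · have hs := s.2; simp only [Finset.mem_Icc] at hs; omega
    · have hm := m.2; simp only [Finset.mem_Icc] at hm; omega
    · have hl := l.2; simp only [Finset.mem_Icc] at hl; omega

/-- Expected partitioning costs of the strategy "smaller pivot first":
`P^sf(0) = P^sf(1) = 0` and `P^sf(n) = (5/3)n − 7/3` for `n ≥ 2`. -/
noncomputable def Psf (n : ℕ) : ℝ := if n ≤ 1 then 0 else 5 / 3 * (n : ℝ) - 7 / 3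

/-! For `j = 1` and `j = n` the middle sum of the recurrence is empty, as is one of the outer
sums, and the remaining outer sum is the same in both cases, so `C(n,n) = C(n,1)` and
`c n = C(n,1)` satisfies
`(n choose 2) (c n - P n) = ∑_{s=1}^{n-2} (n-1-s) c s`.
Taking second differences in `n` removes the history: `E n = (n choose 2) (c n - P n)` satisfies
`E (n+2) - 2 E (n+1) + E n = c n`, which determines `c` from two consecutive values.
For `P = P^sf` the closed form satisfies this identity (an identity in `n` and `H n`) and agrees
with `c` at `n = 3, 4`; it does not at `n = 2`, where `c 2 = 1`. -/

noncomputable def doublePartialSum (c : ℕ → ℝ) (m : ℕ) : ℝ :=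
  ∑ s ∈ Icc 1 m, ((m : ℝ) + 1 - s) * c s

theorem doublePartialSum_succ (c : ℕ → ℝ) (m : ℕ) :
    doublePartialSum c (m + 1) = doublePartialSum c m + ∑ s ∈ Icc 1 (m + 1), c s := by
  have hweight (s : ℕ) : (((m + 1 : ℕ) : ℝ) + 1 - s) * c s = ((m : ℝ) + 1 - s) * c s + c s := by
    push_cast; ring
  simp only [doublePartialSum, sum_Icc_succ_top (Nat.le_add_left 1 m), hweight, sum_add_distrib]
  push_cast
  ring

theorem doublePartialSum_second_diff (c : ℕ → ℝ) (m : ℕ) :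
    doublePartialSum c (m + 2) - 2 * doublePartialSum c (m + 1) + doublePartialSum c m
      = c (m + 2) := by
  rw [doublePartialSum_succ c (m + 1), doublePartialSum_succ c m,
    sum_Icc_succ_top (Nat.le_add_left 1 (m + 1))]
  ring

theorem qsCost_of_le_one (P : ℕ → ℝ) {n : ℕ} (hn : n ≤ 1) (j : ℤ) : qsCost P n j = 0 := by
  rw [qsCost, if_pos (Or.inl hn)]

theorem qsCost_one_eq (P : ℕ → ℝ) {n : ℕ} (hn : 2 ≤ n) :
    qsCost P n 1 = P n + 2 / ((n : ℝ) * ((n : ℝ) - 1)) *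
      ∑ s ∈ Icc 1 (n - 2), ((n : ℝ) - 1 - s) * qsCost P s 1 := by
  rw [qsCost, if_neg (by omega)]
  have hmiddle : ∑ m ∈ (Icc 1 (n - 2)).attach,
      ∑ s ∈ Icc (max 0 (1 - ((m : ℕ) : ℤ) - 1)) (min (1 - 2) ((n : ℤ) - ((m : ℕ) : ℤ) - 2)),
        qsCost P m (1 - s - 1) = 0 :=
    sum_eq_zero fun m _ => by rw [Icc_eq_empty (by omega), sum_empty]
  have hlast : Icc ((n : ℤ) - 1 + 1).toNat (n - 2) = ∅ := Icc_eq_empty (by omega)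
  rw [hmiddle, hlast, attach_empty, sum_empty,
    sum_attach (Icc _ _) (fun s => ((n : ℝ) - 1 - s) * qsCost P s 1)]
  simp

theorem qsCost_self_eq (P : ℕ → ℝ) {n : ℕ} (hn : 2 ≤ n) :
    qsCost P n n = P n + 2 / ((n : ℝ) * ((n : ℝ) - 1)) *
      ∑ s ∈ Icc 1 (n - 2), ((n : ℝ) - 1 - s) * qsCost P s 1 := by
  rw [qsCost, if_neg (by omega)]
  have hfirst : Icc (n : ℤ).toNat (n - 2) = ∅ := Icc_eq_empty (by omega)
  have hmiddle : ∑ m ∈ (Icc 1 (n - 2)).attach,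
      ∑ s ∈ Icc (max 0 ((n : ℤ) - ((m : ℕ) : ℤ) - 1))
          (min ((n : ℤ) - 2) ((n : ℤ) - ((m : ℕ) : ℤ) - 2)),
        qsCost P m ((n : ℤ) - s - 1) = 0 :=
    sum_eq_zero fun m _ => by rw [Icc_eq_empty (by omega), sum_empty]
  rw [hfirst, attach_empty, sum_empty, hmiddle, show (n : ℤ) - n + 1 = 1 by ring,
    sum_attach (Icc _ _) (fun s => ((n : ℝ) - 1 - s) * qsCost P s 1)]
  simp

theorem qsCost_self_eq_one (P : ℕ → ℝ) (n : ℕ) : qsCost P n n = qsCost P n 1 := by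
  rcases le_or_gt n 1 with hn | hn
  · rw [qsCost_of_le_one P hn, qsCost_of_le_one P hn]
  · rw [qsCost_self_eq P hn, qsCost_one_eq P hn]

noncomputable def scaledRecursiveCost (P c : ℕ → ℝ) (n : ℕ) : ℝ := (n.choose 2 : ℝ) * (c n - P n)

theorem scaledRecursiveCost_qsCost (P : ℕ → ℝ) (m : ℕ) :
    scaledRecursiveCost P (fun n => qsCost P n 1) (m + 2) =
      doublePartialSum (fun n => qsCost P n 1) m := by
  rw [scaledRecursiveCost, qsCost_one_eq P (Nat.le_add_left 2 m), Nat.cast_choose_two,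
    Nat.add_sub_cancel, doublePartialSum]
  have hweight (s : ℕ) : (((m + 2 : ℕ) : ℝ) - 1 - s) = (m : ℝ) + 1 - s := by push_cast; ring
  have hne : ((m + 2 : ℕ) : ℝ) - 1 ≠ 0 := by push_cast; linarith [(m.cast_nonneg : (0 : ℝ) ≤ m)]
  simp only [hweight, add_sub_cancel_left]
  field_simp

theorem scaledRecursiveCost_qsCost_second_diff (P : ℕ → ℝ) {n : ℕ} (hn : 2 ≤ n) :
    scaledRecursiveCost P (fun n => qsCost P n 1) (n + 2)
        - 2 * scaledRecursiveCost P (fun n => qsCost P n 1) (n + 1)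
        + scaledRecursiveCost P (fun n => qsCost P n 1) n = qsCost P n 1 := by
  obtain ⟨m, rfl⟩ := Nat.exists_eq_add_of_le' hn
  rw [add_right_comm, scaledRecursiveCost_qsCost, scaledRecursiveCost_qsCost,
    scaledRecursiveCost_qsCost]
  exact doublePartialSum_second_diff _ m

theorem eq_of_scaledRecursiveCost_second_diff {P c f : ℕ → ℝ} {k : ℕ}
    (hc : ∀ n, k ≤ n → scaledRecursiveCost P c (n + 2) - 2 * scaledRecursiveCost P c (n + 1)
      + scaledRecursiveCost P c n = c n)
    (hf : ∀ n, k ≤ n → scaledRecursiveCost P f (n + 2) - 2 * scaledRecursiveCost P f (n + 1)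
      + scaledRecursiveCost P f n = f n)
    (h₀ : c k = f k) (h₁ : c (k + 1) = f (k + 1)) {n : ℕ} (hn : k ≤ n) : c n = f n := by
  suffices ∀ n, k ≤ n → c n = f n ∧ c (n + 1) = f (n + 1) from (this n hn).1
  intro n hn
  induction n, hn using Nat.le_induction with
  | base => exact ⟨h₀, h₁⟩
  | succ n hkn ih =>
    refine ⟨ih.2, ?_⟩
    have hE₀ : scaledRecursiveCost P c n = scaledRecursiveCost P f n := by
      rw [scaledRecursiveCost, ih.1]; rfl
    have hE₁ : scaledRecursiveCost P c (n + 1) = scaledRecursiveCost P f (n + 1) := by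
      rw [scaledRecursiveCost, ih.2]; rfl
    have hE₂ : scaledRecursiveCost P c (n + 2) = scaledRecursiveCost P f (n + 2) := by
      linarith [hc n hkn, hf n hkn, ih.1]
    have hchoose : ((n + 2).choose 2 : ℝ) ≠ 0 :=
      Nat.cast_ne_zero.mpr (Nat.choose_pos (by omega)).ne'
    simpa only [scaledRecursiveCost, mul_right_inj' hchoose, sub_left_inj] using hE₂

theorem H_succ (n : ℕ) : H (n + 1) = H n + 1 / ((n : ℝ) + 1) := by
  rw [H, H, sum_Icc_succ_top (Nat.le_add_left 1 n)]
  push_cast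
  rfl

noncomputable def spfMinCost (n : ℕ) : ℝ := 5 / 2 * (n : ℝ) - 8 / 3 * H n + 1 / 18

theorem scaledRecursiveCost_spfMinCost_second_diff {n : ℕ} (hn : 2 ≤ n) :
    scaledRecursiveCost Psf spfMinCost (n + 2) - 2 * scaledRecursiveCost Psf spfMinCost (n + 1)
      + scaledRecursiveCost Psf spfMinCost n = spfMinCost n := by
  simp only [scaledRecursiveCost, spfMinCost, Psf, Nat.cast_choose_two, H_succ,
    if_neg (by omega : ¬ n ≤ 1), if_neg (by omega : ¬ n + 1 ≤ 1), if_neg (by omega : ¬ n + 2 ≤ 1)]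
  push_cast
  field_simp
  ring

theorem qsCost_Psf_three_one : qsCost Psf 3 1 = spfMinCost 3 := by
  rw [qsCost_one_eq Psf (by norm_num)]
  norm_num [spfMinCost, H, Psf, sum_Icc_succ_top, qsCost_of_le_one]

theorem qsCost_Psf_four_one : qsCost Psf 4 1 = spfMinCost 4 := by
  have h2 : qsCost Psf 2 1 = 1 := by
    rw [qsCost_one_eq Psf (by norm_num)]
    norm_num [Psf]
  rw [qsCost_one_eq Psf (by norm_num)]
  norm_num [spfMinCost, H, Psf, sum_Icc_succ_top, qsCost_of_le_one, h2]

/-- Exact cost of selecting the smallest (equivalently, the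
largest) element with the strategy "smaller pivot first": for `n ≥ 3`,
`C(n,1) = C(n,n) = (5/2)n − (8/3)H_n + 1/18`. -/
theorem spf_smallest_exact (n : ℕ) (hn : 3 ≤ n) :
    qsCost Psf n 1 = qsCost Psf n (n : ℤ) ∧
    qsCost Psf n 1 = 5 / 2 * (n : ℝ) - 8 / 3 * H n + 1 / 18 :=
  ⟨(qsCost_self_eq_one Psf n).symm,
    eq_of_scaledRecursiveCost_second_diff (c := fun n => qsCost Psf n 1)
      (fun _ hm => scaledRecursiveCost_qsCost_second_diff Psf (by omega))
      (fun _ hm => scaledRecursiveCost_spfMinCost_second_diff (by omega))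
      qsCost_Psf_three_one qsCost_Psf_four_one hn⟩
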